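/- arXiv:1907.09106 — 5 statements merged into one kernel-verified Lean document; each statement's English description precedes it below -/
import Mathlib

section
/- Let σ ∈ Σ_i. Then σ is a rationalizable strategy for player i in Γ if and only if there exist a probability structure M appropriate for Γ and a state ω of M such that strat_i(ω) = σ and, for every k ≥ 0, (M,ω) ⊨ B_i(E^k(RAT)), where RAT = ∩_{j=1}^n RAT_j, E(X) = ∩_{j=1}^n B_j X (with B_j X = {ω' : (M,ω') ⊨ B_j X}), E^0(X) = X, and E^{k+1}(X) = E(E^k(X)). Moreover, if σ is rationalizable, M can be taken to be finite with every subset of Ω measurable. -/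
open scoped BigOperators

noncomputable section

/-- A probability distribution on a finite type, represented as a weight function. -/
def IsDist {α : Type*} [Fintype α] (p : α → ℝ) : Prop :=
  (∀ a, 0 ≤ p a) ∧ ∑ a, p a = 1

/-- The probability of a set under a weight function. -/
def probOf {α : Type*} [Fintype α] (p : α → ℝ) (E : Set α) : ℝ :=
  ∑ a, E.indicator p a

/-- A finite normal-form game with `n` players, all utilities in `[0,1]`. -/
structure Game (n : ℕ) where
  S : Fin n → Type
  fintypeS : ∀ i, Fintype (S i)
  decEqS : ∀ i, DecidableEq (S i)
  nonemptyS : ∀ i, Nonempty (S i)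
  u : (i : Fin n) → ((j : Fin n) → S j) → ℝ
  u_mem : ∀ i σ, u i σ ∈ Set.Icc (0 : ℝ) 1

attribute [instance] Game.fintypeS Game.decEqS Game.nonemptyS

namespace Game

variable {n : ℕ}

abbrev Prof (G : Game n) : Type := (j : Fin n) → G.S j

abbrev OppProf (G : Game n) (i : Fin n) : Type := (j : {j : Fin n // j ≠ i}) → G.S j.val

def stratOpp (G : Game n) (i : Fin n) (σ : G.Prof) : G.OppProf i := fun j => σ j.val

def combine (G : Game n) (i : Fin n) (s : G.S i) (τ : G.OppProf i) : G.Prof :=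
  fun j => if h : j = i then cast (congrArg G.S h.symm) s else τ ⟨j, h⟩

/-- Expected utility of strategy `s` of player `i` under belief `b` on opponents' profiles. -/
def EU (G : Game n) (i : Fin n) (s : G.S i) (b : G.OppProf i → ℝ) : ℝ :=
  ∑ τ : G.OppProf i, b τ * G.u i (G.combine i s τ)

/-- `s` is a best response to the belief `b`. -/
def BR (G : Game n) (i : Fin n) (s : G.S i) (b : G.OppProf i → ℝ) : Prop :=
  ∀ s' : G.S i, G.EU i s' b ≤ G.EU i s b

/-- Utility of mixed strategy `m` of player `i` against opponents' profile `τ`. -/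
def EUmix (G : Game n) (i : Fin n) (m : G.S i → ℝ) (τ : G.OppProf i) : ℝ :=
  ∑ s : G.S i, m s * G.u i (G.combine i s τ)

/-- `s` is weakly dominated by the mixed strategy `m` with respect to `T`. -/
def WDom (G : Game n) (i : Fin n) (m : G.S i → ℝ) (s : G.S i)
    (T : Set (G.OppProf i)) : Prop :=
  (∀ τ ∈ T, G.u i (G.combine i s τ) ≤ G.EUmix i m τ) ∧
    ∃ τ ∈ T, G.u i (G.combine i s τ) < G.EUmix i m τ

/-- `s` is strongly dominated by the mixed strategy `m` with respect to `T`. -/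
def SDom (G : Game n) (i : Fin n) (m : G.S i → ℝ) (s : G.S i)
    (T : Set (G.OppProf i)) : Prop :=
  ∀ τ ∈ T, G.u i (G.combine i s τ) < G.EUmix i m τ

/-- Strategies of player `i` surviving `k` rounds of iterated deletion of weakly
dominated strategies. -/
def NWD (G : Game n) : ℕ → (i : Fin n) → Set (G.S i)
  | 0 => fun _ => Set.univ
  | k + 1 => fun i =>
      {s | s ∈ NWD G k i ∧
        ¬∃ m : G.S i → ℝ, IsDist m ∧
          G.WDom i m s {τ : G.OppProf i | ∀ j, τ j ∈ NWD G k j.val}}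

/-- Strategies of player `i` surviving `k` rounds of iterated deletion of strongly
dominated strategies. -/
def NSD (G : Game n) : ℕ → (i : Fin n) → Set (G.S i)
  | 0 => fun _ => Set.univ
  | k + 1 => fun i =>
      {s | s ∈ NSD G k i ∧
        ¬∃ m : G.S i → ℝ, IsDist m ∧
          G.SDom i m s {τ : G.OppProf i | ∀ j, τ j ∈ NSD G k j.val}}

end Game

open MeasureTheory in
/-- A probability structure appropriate for the game `G`. -/
structure PStruct {n : ℕ} (G : Game n) where
  Ω : Type
  meas : MeasurableSpace Ω
  strat : Ω → G.Prof
  PR : Fin n → Ω → @Measure Ω meas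
  PR_prob : ∀ i ω, @IsProbabilityMeasure Ω meas (PR i ω)
  strat_meas : ∀ (j : Fin n) (s : G.S j), MeasurableSet[meas] {ω | strat ω j = s}
  PR_own_strat : ∀ i ω, PR i ω {ω' | strat ω' i = strat ω i} = 1
  PR_meas : ∀ (i : Fin n) (π : @Measure Ω meas), MeasurableSet[meas] {ω | PR i ω = π}
  PR_own_PR : ∀ i ω, PR i ω {ω' | PR i ω' = PR i ω} = 1

namespace PStruct

variable {n : ℕ} {G : Game n}

/-- The belief on opponents' strategy profiles induced by `PR i ω`. -/
def belief (M : PStruct G) (i : Fin n) (ω : M.Ω) : G.OppProf i → ℝ :=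
  fun τ => (M.PR i ω {ω' | G.stratOpp i (M.strat ω') = τ}).toReal

/-- `(M,ω) ⊨ RAT_i`. -/
def RATi (M : PStruct G) (i : Fin n) (ω : M.Ω) : Prop :=
  G.BR i (M.strat ω i) (M.belief i ω)

/-- `(M,ω) ⊨ B_i E`. -/
def Bel (M : PStruct G) (i : Fin n) (ω : M.Ω) (E : Set M.Ω) : Prop :=
  ∃ F, @MeasurableSet M.Ω M.meas F ∧ F ⊆ E ∧ M.PR i ω F = 1

/-- `(M,ω) ⊨ ⟨B_i⟩ E`. -/
def BelPos (M : PStruct G) (i : Fin n) (ω : M.Ω) (E : Set M.Ω) : Prop :=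
  ∃ F, @MeasurableSet M.Ω M.meas F ∧ F ⊆ E ∧ 0 < M.PR i ω F

end PStruct

/-- The events `RATzero^k_i(M)`, defined simultaneously for all appropriate structures. -/
def RATzero {n : ℕ} (G : Game n) : (k : ℕ) → (M : PStruct G) → Fin n → Set M.Ω
  | 0, _, _ => Set.univ
  | k + 1, M, i =>
      {ω | M.RATi i ω ∧
        M.Bel i ω {ω' | ∃ M' : PStruct G, ∃ ω'' : M'.Ω,
          M'.strat ω'' i = M.strat ω' i ∧ ω'' ∈ RATzero G k M' i} ∧
        M.Bel i ω {ω' | ∀ j, j ≠ i → ω' ∈ RATzero G k M j} ∧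
        ∀ j, j ≠ i → ∀ s : G.S j,
          (∃ M' : PStruct G, ∃ ω' : M'.Ω, M'.strat ω' j = s ∧
              ∀ j', j' ≠ i → ω' ∈ RATzero G k M' j') →
            M.BelPos i ω {ω'' | M.strat ω'' j = s}}

/-- The events `RAT^k_i(M)`. -/
def RATk {n : ℕ} (G : Game n) (M : PStruct G) : (k : ℕ) → Fin n → Set M.Ω
  | 0, _ => Set.univ
  | k + 1, i => {ω | M.RATi i ω ∧ M.Bel i ω {ω' | ∀ j, j ≠ i → ω' ∈ RATk G M k j}}

/-- The event that every player is rational. -/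
def RATall {n : ℕ} {G : Game n} (M : PStruct G) : Set M.Ω := {ω | ∀ j, M.RATi j ω}

/-- The "everyone believes" operator iterated `k` times. -/
def Ek {n : ℕ} {G : Game n} (M : PStruct G) : ℕ → Set M.Ω → Set M.Ω
  | 0, X => X
  | k + 1, X => {ω | ∀ j, M.Bel j ω (Ek M k X)}

/-- `σ` is a rationalizable strategy for player `i`. -/
def Rationalizable {n : ℕ} (G : Game n) (i : Fin n) (σ : G.S i) : Prop :=
  ∃ Z : (j : Fin n) → Set (G.S j),
    σ ∈ Z i ∧
    ∀ j, ∀ σ' ∈ Z j, ∃ μ : G.OppProf j → ℝ, IsDist μ ∧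
      (∀ τ, 0 < μ τ → ∀ j', τ j' ∈ Z j'.val) ∧ G.BR j σ' μ

/-- `σ` is rationalizable′ for player `i`. -/
def Rationalizable' {n : ℕ} (G : Game n) (i : Fin n) (σ : G.S i) : Prop :=
  ∃ X : ℕ → (j : Fin n) → Set (G.S j),
    (∀ j, X 0 j = Set.univ) ∧
    (∀ (k : ℕ) (j : Fin n), ∀ σ' ∈ X (k + 1) j, ∃ μ : G.OppProf j → ℝ, IsDist μ ∧
      (∀ τ, 0 < μ τ → ∀ j', τ j' ∈ X k j'.val) ∧ G.BR j σ' μ) ∧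
    ∀ k, σ ∈ X k i

end

/-! If `Z` rationalizes `σ`, take the strategy profiles as states and let player `j` at `ρ` be
certain of `ρ j` and believe that the others play according to a belief justifying `ρ j`. The
event "everyone plays in `Z`" consists of rational states and is believed by every player at each
of its states, so it lies in every `E^k(RAT)`; `σ` is played at one of its states.

Conversely, let `D_k = RAT ∩ E(RAT) ∩ ⋯ ∩ E^k(RAT)`. A strategy played on `D_(k+1)` is a best
response to the player's own belief, which only charges profiles played on `D_k`, the event she
believes. So the sets of strategies played on the `D_k` decrease, each one justified by the next
coarser one; in a finite game they stabilize, and the limit rationalizes `σ`. -/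

open MeasureTheory

noncomputable def IsDist.toPMF {α : Type*} [Fintype α] {p : α → ℝ} (hp : IsDist p) : PMF α :=
  PMF.ofFintype (fun a => ENNReal.ofReal (p a)) <| by
    rw [← ENNReal.ofReal_sum_of_nonneg fun a _ => hp.1 a, hp.2, ENNReal.ofReal_one]

lemma IsDist.toReal_toPMF {α : Type*} [Fintype α] {p : α → ℝ} (hp : IsDist p) :
    (fun a => (hp.toPMF a).toReal) = p :=
  funext fun a => ENNReal.toReal_ofReal (hp.1 a)

lemma IsDist.mem_support_toPMF {α : Type*} [Fintype α] {p : α → ℝ} (hp : IsDist p) {a : α} :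
    a ∈ hp.toPMF.support ↔ 0 < p a := by
  simp [IsDist.toPMF]

namespace Game

variable {n : ℕ} {G : Game n}

@[simp]
lemma combine_apply_self (i : Fin n) (s : G.S i) (τ : G.OppProf i) : G.combine i s τ i = s := by
  simp [combine]

lemma combine_apply_of_ne (i : Fin n) (s : G.S i) (τ : G.OppProf i) {j : Fin n} (h : j ≠ i) :
    G.combine i s τ j = τ ⟨j, h⟩ :=
  dif_neg h

@[simp]
lemma stratOpp_combine (i : Fin n) (s : G.S i) (τ : G.OppProf i) :
    G.stratOpp i (G.combine i s τ) = τ :=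
  funext fun j => combine_apply_of_ne i s τ j.2

lemma combine_mem_pi {Z : (j : Fin n) → Set (G.S j)} {i : Fin n} {s : G.S i} {τ : G.OppProf i}
    (hs : s ∈ Z i) (hτ : ∀ j, τ j ∈ Z j.val) (j : Fin n) : G.combine i s τ j ∈ Z j := by
  by_cases h : j = i
  · subst h
    simpa using hs
  · simpa [combine_apply_of_ne i s τ h] using hτ ⟨j, h⟩

variable (G) in
def IsBRToBeliefIn (X : (j : Fin n) → Set (G.S j)) (i : Fin n) (s : G.S i) : Prop :=
  ∃ μ : G.OppProf i → ℝ, IsDist μ ∧ (∀ τ, 0 < μ τ → ∀ j, τ j ∈ X j.val) ∧ G.BR i s μ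

theorem rationalizable_of_antitone {X : ℕ → (j : Fin n) → Set (G.S j)} (hX : Antitone X)
    (hstep : ∀ k j, ∀ s ∈ X (k + 1) j, G.IsBRToBeliefIn (X k) j s) {i : Fin n} {σ : G.S i}
    (hσ : ∀ k, σ ∈ X k i) : Rationalizable G i σ := by
  obtain ⟨k, hk⟩ := WellFoundedGT.monotone_chain_condition
    (α := ((j : Fin n) → Set (G.S j))ᵒᵈ) ⟨fun k => OrderDual.toDual (X k), hX⟩
  have hstable : X k = X (k + 1) := hk (k + 1) k.le_succ
  refine ⟨X k, hσ k, fun j s hs => hstep k j s ?_⟩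
  rwa [← hstable]

end Game

namespace PStruct

variable {n : ℕ} {G : Game n} {M : PStruct G}

attribute [local instance] PStruct.meas PStruct.PR_prob

lemma Bel.mono {i : Fin n} {ω : M.Ω} {A B : Set M.Ω} (h : M.Bel i ω A) (hAB : A ⊆ B) :
    M.Bel i ω B :=
  let ⟨F, hF, hFA, hF1⟩ := h
  ⟨F, hF, hFA.trans hAB, hF1⟩

lemma Bel.inter {i : Fin n} {ω : M.Ω} {A B : Set M.Ω} (hA : M.Bel i ω A) (hB : M.Bel i ω B) :
    M.Bel i ω (A ∩ B) := by
  obtain ⟨F, hF, hFA, hF1⟩ := hA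
  obtain ⟨F', hF', hF'B, hF'1⟩ := hB
  refine ⟨F ∩ F', hF.inter hF', Set.inter_subset_inter hFA hF'B, ?_⟩
  rw [measure_inter_conull ((prob_compl_eq_zero_iff hF').2 hF'1), hF1]

lemma Bel.exists_mem {i : Fin n} {ω : M.Ω} {A B : Set M.Ω} (hA : M.Bel i ω A)
    (hB : M.PR i ω B ≠ 0) : ∃ ω' ∈ A, ω' ∈ B := by
  obtain ⟨F, hF, hFA, hF1⟩ := hA
  have hBF : M.PR i ω (B ∩ F) ≠ 0 := by
    rwa [measure_inter_conull ((prob_compl_eq_zero_iff hF).2 hF1)]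
  obtain ⟨ω', hω'B, hω'F⟩ := nonempty_of_measure_ne_zero hBF
  exact ⟨ω', hFA hω'F, hω'B⟩

lemma bel_own_strat (i : Fin n) (ω : M.Ω) : M.Bel i ω {ω' | M.strat ω' i = M.strat ω i} :=
  ⟨_, M.strat_meas i _, subset_rfl, M.PR_own_strat i ω⟩

lemma subset_Ek_of_forall_bel {E X : Set M.Ω} (hEX : E ⊆ X) (hE : ∀ ω ∈ E, ∀ j, M.Bel j ω E) :
    ∀ k, E ⊆ Ek M k X
  | 0 => hEX
  | k + 1 => fun ω hω j => (hE ω hω j).mono (subset_Ek_of_forall_bel hEX hE k)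

lemma measurableSet_stratOpp_eq (i : Fin n) (τ : G.OppProf i) :
    MeasurableSet {ω | G.stratOpp i (M.strat ω) = τ} := by
  have hiInter : {ω | G.stratOpp i (M.strat ω) = τ} = ⋂ j, {ω | M.strat ω j.val = τ j} := by
    ext ω
    simp [funext_iff, Game.stratOpp]
  rw [hiInter]
  exact MeasurableSet.iInter fun j => M.strat_meas j.val (τ j)

lemma isDist_belief (i : Fin n) (ω : M.Ω) : IsDist (M.belief i ω) := by
  refine ⟨fun τ => ENNReal.toReal_nonneg, ?_⟩
  have hsum := sum_measure_preimage_singleton (μ := M.PR i ω) Finset.univ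
    (f := fun ω' => G.stratOpp i (M.strat ω')) fun τ _ => measurableSet_stratOpp_eq i τ
  rw [Finset.coe_univ, Set.preimage_univ, measure_univ] at hsum
  rw [← ENNReal.toReal_one, ← hsum, ENNReal.toReal_sum fun τ _ => measure_ne_top _ _]
  rfl

def played (M : PStruct G) (D : Set M.Ω) (j : Fin n) : Set (G.S j) :=
  (fun ω => M.strat ω j) '' D

lemma RATi.isBRToBeliefIn_played {j : Fin n} {ω : M.Ω} {D : Set M.Ω} (hrat : M.RATi j ω)
    (hD : M.Bel j ω D) : G.IsBRToBeliefIn (M.played D) j (M.strat ω j) := by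
  refine ⟨M.belief j ω, isDist_belief j ω, fun τ hτ j' => ?_, hrat⟩
  obtain ⟨ω', hω'D, hω'τ⟩ := hD.exists_mem (B := {ω' | G.stratOpp j (M.strat ω') = τ})
    fun h0 => by simp [belief, h0] at hτ
  exact ⟨ω', hω'D, congrFun hω'τ j'⟩

variable (M) in
def RATUpTo : ℕ → Set M.Ω
  | 0 => RATall M
  | k + 1 => RATUpTo k ∩ Ek M (k + 1) (RATall M)

lemma RATUpTo_subset_RATall : ∀ k, M.RATUpTo k ⊆ RATall M
  | 0 => subset_rfl
  | k + 1 => Set.inter_subset_left.trans (RATUpTo_subset_RATall k)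

lemma RATUpTo_antitone : Antitone M.RATUpTo :=
  antitone_nat_of_succ_le fun _ => Set.inter_subset_left

lemma bel_RATUpTo_of_mem_succ {k : ℕ} {ω : M.Ω} (hω : ω ∈ M.RATUpTo (k + 1)) (j : Fin n) :
    M.Bel j ω (M.RATUpTo k) := by
  induction k generalizing ω with
  | zero => exact hω.2 j
  | succ k ih => exact (ih hω.1).inter (hω.2 j)

lemma bel_RATUpTo {i : Fin n} {ω : M.Ω} (hb : ∀ k, M.Bel i ω (Ek M k (RATall M))) (k : ℕ) :
    M.Bel i ω (M.RATUpTo k) := by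
  induction k with
  | zero => exact hb 0
  | succ k ih => exact ih.inter (hb (k + 1))

theorem rationalizable_of_bel_Ek {i : Fin n} {ω : M.Ω}
    (hb : ∀ k, M.Bel i ω (Ek M k (RATall M))) : Rationalizable G i (M.strat ω i) := by
  refine Game.rationalizable_of_antitone (X := fun k => M.played (M.RATUpTo k))
    (fun k m hkm j => Set.image_mono (RATUpTo_antitone hkm)) ?_ fun k => ?_
  · rintro k j _ ⟨ω', hω', rfl⟩
    exact RATi.isBRToBeliefIn_played (RATUpTo_subset_RATall (k + 1) hω' j)
      (bel_RATUpTo_of_mem_succ hω' j)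
  · obtain ⟨ω', hω', -⟩ := ((bel_RATUpTo hb k).inter (bel_own_strat i ω)).exists_mem
      (B := Set.univ) (by simp)
    exact ⟨ω', hω'.1, hω'.2⟩

lemma toMeasure_map_combine_eq_one {j : Fin n} (P : PMF (G.OppProf j)) (s : G.S j)
    {E : Set G.Prof} (h : ∀ τ ∈ P.support, G.combine j s τ ∈ E) :
    @PMF.toMeasure _ ⊤ (P.map (G.combine j s)) E = 1 := by
  refine (@PMF.toMeasure_apply_eq_one_iff _ ⊤ _ _ trivial).2 ?_
  rw [PMF.support_map]
  rintro _ ⟨τ, hτ, rfl⟩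
  exact h τ hτ

noncomputable def ofBeliefs (bel : (j : Fin n) → G.S j → PMF (G.OppProf j)) : PStruct G where
  Ω := G.Prof
  meas := ⊤
  strat := id
  PR j ρ := @PMF.toMeasure _ ⊤ ((bel j (ρ j)).map (G.combine j (ρ j)))
  PR_prob _ _ := @PMF.toMeasure.isProbabilityMeasure _ ⊤ _
  strat_meas _ _ := trivial
  PR_own_strat _ _ := toMeasure_map_combine_eq_one _ _ fun _ _ => by simp
  PR_meas _ _ := trivial
  PR_own_PR _ _ := toMeasure_map_combine_eq_one _ _ fun _ _ => by simp

section ofBeliefs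

variable (bel : (j : Fin n) → G.S j → PMF (G.OppProf j))

lemma ofBeliefs_belief (j : Fin n) (ρ : G.Prof) :
    (ofBeliefs bel).belief j ρ = fun τ => (bel j (ρ j) τ).toReal := by
  funext τ
  have hpre : G.combine j (ρ j) ⁻¹' {ρ' | G.stratOpp j ρ' = τ} = {τ} := by
    ext τ'
    simp
  show (@PMF.toMeasure _ ⊤ ((bel j (ρ j)).map (G.combine j (ρ j)))
    {ρ' | G.stratOpp j ρ' = τ}).toReal = _
  rw [PMF.toMeasure_map_apply (mα := ⊤) (mβ := ⊤) _ _ _ (fun _ _ => trivial) trivial, hpre,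
    @PMF.toMeasure_apply_singleton _ ⊤ _ _ trivial]

lemma ofBeliefs_RATi_iff {j : Fin n} {ρ : G.Prof} :
    (ofBeliefs bel).RATi j ρ ↔ G.BR j (ρ j) fun τ => (bel j (ρ j) τ).toReal := by
  show G.BR j (ρ j) ((ofBeliefs bel).belief j ρ) ↔ _
  rw [ofBeliefs_belief]

lemma ofBeliefs_bel {j : Fin n} {ρ : G.Prof} {E : Set G.Prof}
    (h : ∀ τ ∈ (bel j (ρ j)).support, G.combine j (ρ j) τ ∈ E) : (ofBeliefs bel).Bel j ρ E :=
  ⟨E, trivial, subset_rfl, toMeasure_map_combine_eq_one _ _ h⟩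

end ofBeliefs

theorem exists_finite_of_rationalizable {i : Fin n} {σ : G.S i} (h : Rationalizable G i σ) :
    ∃ (M : PStruct G) (ω : M.Ω), Finite M.Ω ∧ M.meas = ⊤ ∧ M.strat ω i = σ ∧
      ∀ k : ℕ, M.Bel i ω (Ek M k (RATall M)) := by
  obtain ⟨Z, hσZ, hZ⟩ := h
  have hjustify : ∀ j (s : G.S j), ∃ P : PMF (G.OppProf j), s ∈ Z j →
      (∀ τ ∈ P.support, ∀ j', τ j' ∈ Z j'.val) ∧ G.BR j s fun τ => (P τ).toReal := by
    intro j s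
    by_cases hs : s ∈ Z j
    · obtain ⟨μ, hμ, hsupp, hbr⟩ := hZ j s hs
      exact ⟨hμ.toPMF, fun _ =>
        ⟨fun τ hτ => hsupp τ (hμ.mem_support_toPMF.1 hτ), by rwa [hμ.toReal_toPMF]⟩⟩
    · exact ⟨PMF.pure (Classical.arbitrary _), fun h => absurd h hs⟩
  choose bel hbel using hjustify
  set E := {ρ : G.Prof | ∀ j, ρ j ∈ Z j}
  have hE_bel : ∀ ρ ∈ E, ∀ j, (ofBeliefs bel).Bel j ρ E := fun ρ hρ j =>
    ofBeliefs_bel bel fun τ hτ => Game.combine_mem_pi (hρ j) ((hbel j (ρ j) (hρ j)).1 τ hτ)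
  have hE_rat : E ⊆ RATall (ofBeliefs bel) := fun ρ hρ j =>
    (ofBeliefs_RATi_iff bel).2 (hbel j (ρ j) (hρ j)).2
  obtain ⟨τ, hτ⟩ := (bel i σ).support_nonempty
  have hω : G.combine i σ τ ∈ E := Game.combine_mem_pi hσZ ((hbel i σ hσZ).1 τ hτ)
  exact ⟨ofBeliefs bel, G.combine i σ τ, inferInstanceAs (Finite G.Prof), rfl,
    G.combine_apply_self i σ τ, fun k => subset_Ek_of_forall_bel hE_rat hE_bel (k + 1) hω i⟩

end PStruct

/-- epistemic characterization of rationalizability via common belief of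
rationality; moreover the structure can be taken finite with every subset measurable. -/
theorem rationalizability_characterization {n : ℕ} (G : Game n) (i : Fin n) (σ : G.S i) :
    (Rationalizable G i σ ↔
      ∃ (M : PStruct G) (ω : M.Ω), M.strat ω i = σ ∧
        ∀ k : ℕ, M.Bel i ω (Ek M k (RATall M))) ∧
    (Rationalizable G i σ →
      ∃ (M : PStruct G) (ω : M.Ω), Finite M.Ω ∧ M.meas = ⊤ ∧ M.strat ω i = σ ∧
        ∀ k : ℕ, M.Bel i ω (Ek M k (RATall M))) := by
  refine ⟨⟨fun h => ?_, ?_⟩, PStruct.exists_finite_of_rationalizable⟩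
  · obtain ⟨M, ω, -, -, hω, hb⟩ := PStruct.exists_finite_of_rationalizable h
    exact ⟨M, ω, hω, hb⟩
  · rintro ⟨M, ω, rfl, hb⟩
    exact PStruct.rationalizable_of_bel_Ek hb
end

section
/- A strategy σ ∈ Σ_i is rationalizable if and only if it is rationalizable'. -/
open scoped BigOperators

/-- rationalizability coincides with rationalizability′. -/
theorem rationalizable_iff_rationalizable' {n : ℕ} (G : Game n) (i : Fin n) (σ : G.S i) :
    Rationalizable G i σ ↔ Rationalizable' G i σ := by
  constructor
  · rintro ⟨Z, hσ, hZ⟩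
    refine ⟨fun k j => if k = 0 then Set.univ else Z j, fun j => rfl, ?_, ?_⟩
    · intro k j σ' hσ'
      simp only [Nat.succ_ne_zero, if_false] at hσ'
      obtain ⟨μ, hμ1, hμ2, hμ3⟩ := hZ j σ' hσ'
      refine ⟨μ, hμ1, fun τ hτ j' => ?_, hμ3⟩
      by_cases hk : k = 0 <;> simp [hk, hμ2 τ hτ j']
    · intro k
      by_cases hk : k = 0 <;> simp [hk, hσ]
  · rintro ⟨X, hX0, hXstep, hXσ⟩
    refine ⟨fun j => {s | {m | s ∈ X m j}.Infinite}, ?_, ?_⟩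
    · exact Set.infinite_of_injective_forall_mem (f := fun m : ℕ => m)
        (fun a b h => h) (fun m => hXσ m)
    · intro j s hs
      -- infinitely many k with s ∈ X (k+1) j
      have hK : {k : ℕ | s ∈ X (k + 1) j}.Infinite := by
        have h1 : ({m | s ∈ X m j} \ {0}).Infinite :=
          hs.diff (Set.finite_singleton 0)
        have h2 : (fun k : ℕ => k + 1) ⁻¹' ({m | s ∈ X m j} \ {0}) ⊆
            {k : ℕ | s ∈ X (k + 1) j} := fun k hk => hk.1
        refine Set.Infinite.mono h2 (h1.preimage ?_)
        rintro m ⟨hm, hm0⟩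
        obtain ⟨m', rfl⟩ := Nat.exists_eq_succ_of_ne_zero (by simpa using hm0)
        exact ⟨m', rfl⟩
      set K := {k : ℕ | s ∈ X (k + 1) j} with hKdef
      have : Infinite K := Set.infinite_coe_iff.mpr hK
      -- choose beliefs
      have hch : ∀ k : K, ∃ μ : G.OppProf j → ℝ, IsDist μ ∧
          (∀ τ, 0 < μ τ → ∀ j', τ j' ∈ X (k : ℕ) j'.val) ∧ G.BR j s μ :=
        fun k => hXstep k j s k.2
      choose μf hμ1 hμ2 hμ3 using hch
      -- pigeonhole on supports
      obtain ⟨S, hS⟩ := Finite.exists_infinite_fiber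
        (fun k : K => ({τ | 0 < μf k τ} : Set (G.OppProf j)))
      obtain ⟨k0⟩ : Nonempty ((fun k : K => ({τ | 0 < μf k τ} : Set (G.OppProf j))) ⁻¹' {S}) :=
        Infinite.nonempty _
      refine ⟨μf k0.1, hμ1 _, ?_, hμ3 _⟩
      intro τ hτ j'
      have hτS : τ ∈ S := by
        have := k0.2
        simp only [Set.mem_preimage, Set.mem_singleton_iff] at this
        rw [← this]; exact hτ
      refine Set.infinite_of_injective_forall_mem
        (f := fun k : (fun k : K => ({τ | 0 < μf k τ} : Set (G.OppProf j))) ⁻¹' {S} =>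
          ((k : K) : ℕ)) ?_ ?_
      · intro a b hab
        exact Subtype.ext (Subtype.ext hab)
      · intro k
        have hkS : (fun k : K => ({τ | 0 < μf k τ} : Set (G.OppProf j))) k = S := k.2
        have hτk : τ ∈ ({τ | 0 < μf k.1 τ} : Set (G.OppProf j)) := by
          rw [show ({τ | 0 < μf k.1 τ} : Set (G.OppProf j)) = S from hkS]; exact hτS
        exact hμ2 k.1 τ hτk j'
end

section
/- Let Σ'_{-i} ⊆ Σ_{-i} be nonempty and let σ ∈ Σ_i. Then σ is not strongly dominated by any mixed strategy of player i with respect to Σ'_{-i} if and only if there exists a probability distribution μ on Σ_{-i} whose support is a subset of Σ'_{-i} such that σ is a best response to μ. -/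
open scoped BigOperators

private lemma clm_eq_sum_coords {ι : Type*} [Fintype ι] [DecidableEq ι]
    (f : (ι → ℝ) →L[ℝ] ℝ) (y : ι → ℝ) :
    f y = ∑ τ, y τ * f (Pi.single τ 1) := by
  conv_lhs => rw [← Finset.univ_sum_single y]
  rw [map_sum]
  refine Finset.sum_congr rfl fun τ _ => ?_
  have h1 : Pi.single τ (y τ) = y τ • (Pi.single τ (1:ℝ) : ι → ℝ) := by
    rw [← Pi.single_smul, smul_eq_mul, mul_one]
  rw [h1, map_smul, smul_eq_mul]

/-- Pearce: `σ` is not strongly dominated by any mixed strategy with respect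
to a nonempty `T ⊆ Σ_{-i}` iff it is a best response to some belief with support in `T`. -/
theorem not_strongly_dominated_iff_best_response {n : ℕ} (G : Game n) (i : Fin n)
    (T : Set (G.OppProf i)) (hT : T.Nonempty) (σ : G.S i) :
    (¬∃ m : G.S i → ℝ, IsDist m ∧ G.SDom i m σ T) ↔
      ∃ μ : G.OppProf i → ℝ, IsDist μ ∧ (∀ τ, 0 < μ τ → τ ∈ T) ∧ G.BR i σ μ := by
  classical
  constructor
  · -- hard direction: not dominated → best response to some belief
    intro hnd
    set A : G.S i → G.OppProf i → ℝ :=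
      fun s τ => G.u i (G.combine i s τ) - G.u i (G.combine i σ τ) with hA
    set C : Set (G.OppProf i → ℝ) :=
      {y | ∃ m : G.S i → ℝ, IsDist m ∧ y = fun τ => ∑ s, m s * A s τ} with hCdef
    set P : Set (G.OppProf i → ℝ) := T.pi (fun _ => Set.Ioi (0:ℝ)) with hPdef
    have hPmem : ∀ y : G.OppProf i → ℝ, y ∈ P ↔ ∀ τ ∈ T, 0 < y τ := by
      intro y; simp [hPdef, Set.mem_pi]
    have hPopen : IsOpen P := isOpen_set_pi (Set.toFinite T) (fun _ _ => isOpen_Ioi)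
    have hPconv : Convex ℝ P := convex_pi (fun τ _ => convex_Ioi 0)
    have hCconv : Convex ℝ C := by
      rintro y₁ ⟨m₁, hm₁, rfl⟩ y₂ ⟨m₂, hm₂, rfl⟩ a b ha hb hab
      refine ⟨fun s => a * m₁ s + b * m₂ s,
        ⟨fun s => add_nonneg (mul_nonneg ha (hm₁.1 s)) (mul_nonneg hb (hm₂.1 s)), ?_⟩, ?_⟩
      · rw [Finset.sum_add_distrib, ← Finset.mul_sum, ← Finset.mul_sum, hm₁.2, hm₂.2]
        simpa using hab
      · funext τ
        simp only [Pi.add_apply, Pi.smul_apply, smul_eq_mul]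
        rw [Finset.mul_sum, Finset.mul_sum, ← Finset.sum_add_distrib]
        exact Finset.sum_congr rfl fun s _ => by ring
    have hdisj : Disjoint P C := by
      rw [Set.disjoint_left]
      rintro y hyP ⟨m, hm, rfl⟩
      refine hnd ⟨m, hm, fun τ hτ => ?_⟩
      have h1 : 0 < ∑ s, m s * A s τ := (hPmem _).1 hyP τ hτ
      have h2 : ∑ s, m s * A s τ = G.EUmix i m τ - G.u i (G.combine i σ τ) := by
        simp only [hA, mul_sub, Finset.sum_sub_distrib, ← Finset.sum_mul, hm.2, one_mul,
          Game.EUmix]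
      linarith
    obtain ⟨f, u0, hPlt, hCge⟩ := geometric_hahn_banach_open hPconv hPopen hCconv hdisj
    set y₀ : G.OppProf i → ℝ := T.indicator (fun _ => 1) with hy₀def
    have hy₀P : y₀ ∈ P := (hPmem _).2 fun τ hτ => by
      simp [hy₀def, Set.indicator_of_mem hτ]
    have hy₀lt : f y₀ < u0 := hPlt _ hy₀P
    -- coefficients vanish off T
    have hoff : ∀ τ ∉ T, f (Pi.single τ (1:ℝ)) = 0 := by
      intro τ hτ
      by_contra hc
      have hmem : ∀ t : ℝ, y₀ + t • (Pi.single τ (1:ℝ) : G.OppProf i → ℝ) ∈ P := by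
        intro t
        refine (hPmem _).2 fun τ' hτ' => ?_
        have hne : τ' ≠ τ := fun h => hτ (h ▸ hτ')
        simp [hy₀def, Set.indicator_of_mem hτ', Pi.single_eq_of_ne hne]
      have h := hPlt _ (hmem ((u0 - f y₀) / f (Pi.single τ 1)))
      rw [map_add, map_smul, smul_eq_mul, div_mul_cancel₀ _ hc] at h
      linarith
    -- coefficients are nonpositive
    have hle : ∀ τ, f (Pi.single τ (1:ℝ)) ≤ 0 := by
      intro τ
      by_cases hτ : τ ∈ T
      · by_contra hc
        push_neg at hc
        have hmem : ∀ t : ℝ, 0 ≤ t → y₀ + t • (Pi.single τ (1:ℝ) : G.OppProf i → ℝ) ∈ P := by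
          intro t ht
          refine (hPmem _).2 fun τ' hτ' => ?_
          by_cases h : τ' = τ
          · subst h
            simp only [Pi.add_apply, Pi.smul_apply, smul_eq_mul, Pi.single_eq_same,
              hy₀def, Set.indicator_of_mem hτ']
            linarith
          · simp [hy₀def, Set.indicator_of_mem hτ', Pi.single_eq_of_ne h]
        have ht0 : 0 ≤ (u0 - f y₀) / f (Pi.single τ 1) :=
          div_nonneg (by linarith) hc.le
        have h := hPlt _ (hmem _ ht0)
        rw [map_add, map_smul, smul_eq_mul, div_mul_cancel₀ _ (ne_of_gt hc)] at h
        linarith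
      · exact (hoff τ hτ).le
    -- the separating level is nonnegative
    have hu0 : 0 ≤ u0 := by
      by_contra hc
      push_neg at hc
      have hfneg : f y₀ < 0 := lt_trans hy₀lt hc
      have hεP : ∀ ε : ℝ, 0 < ε → (ε • y₀) ∈ P := by
        intro ε hε
        refine (hPmem _).2 fun τ hτ => ?_
        simp only [Pi.smul_apply, smul_eq_mul, hy₀def, Set.indicator_of_mem hτ]
        linarith
      have hεpos : 0 < u0 / f y₀ := div_pos_of_neg_of_neg hc hfneg
      have h := hPlt _ (hεP _ hεpos)
      rw [map_smul, smul_eq_mul, div_mul_cancel₀ _ (ne_of_lt hfneg)] at h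
      exact lt_irrefl _ h
    -- 0 ∈ C (take the mixed strategy δ_σ)
    have h0C : (0 : G.OppProf i → ℝ) ∈ C := by
      refine ⟨fun s => if s = σ then 1 else 0,
        ⟨fun s => by by_cases h : s = σ <;> simp [h], by simp⟩, ?_⟩
      funext τ
      simp [hA, ite_mul, Finset.sum_ite_eq']
    -- some coefficient is strictly negative
    have hne : ∃ τ, f (Pi.single τ (1:ℝ)) < 0 := by
      by_contra hc
      push_neg at hc
      have hz : ∀ τ, f (Pi.single τ (1:ℝ)) = 0 := fun τ => le_antisymm (hle τ) (hc τ)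
      have hf0 : f y₀ = 0 := by rw [clm_eq_sum_coords]; simp [hz]
      have h2 : u0 ≤ f 0 := hCge _ h0C
      rw [map_zero] at h2
      rw [hf0] at hy₀lt
      linarith
    set S₀ : ℝ := ∑ τ, -(f (Pi.single τ (1:ℝ))) with hS₀def
    have hS₀pos : 0 < S₀ := by
      obtain ⟨τ, hτ⟩ := hne
      exact Finset.sum_pos' (fun τ' _ => by simpa using hle τ')
        ⟨τ, Finset.mem_univ τ, by simpa using hτ⟩
    set μ : G.OppProf i → ℝ := fun τ => (-(f (Pi.single τ (1:ℝ)))) / S₀ with hμdef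
    refine ⟨μ, ⟨fun τ => div_nonneg (by simpa using hle τ) hS₀pos.le, ?_⟩, ?_, ?_⟩
    · show ∑ τ : G.OppProf i, -f (Pi.single τ 1) / S₀ = 1
      rw [← Finset.sum_div, ← hS₀def, div_self (ne_of_gt hS₀pos)]
    · intro τ hτ
      by_contra hc
      simp only [hμdef, hoff τ hc, neg_zero, zero_div, lt_self_iff_false] at hτ
    · intro s
      have hbs : (fun τ => A s τ) ∈ C := by
        refine ⟨fun s' => if s' = s then 1 else 0,
          ⟨fun s' => by by_cases h : s' = s <;> simp [h], by simp⟩, ?_⟩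
        funext τ
        simp [ite_mul, Finset.sum_ite_eq']
      have hfb : 0 ≤ f (fun τ => A s τ) := le_trans hu0 (hCge _ hbs)
      have hexp : f (fun τ => A s τ) = ∑ τ, A s τ * f (Pi.single τ 1) :=
        clm_eq_sum_coords f _
      have key : G.EU i s μ - G.EU i σ μ = -(f (fun τ => A s τ)) / S₀ := by
        rw [Game.EU, Game.EU, ← Finset.sum_sub_distrib, hexp, neg_div, Finset.sum_div,
          ← Finset.sum_neg_distrib]
        refine Finset.sum_congr rfl fun τ _ => ?_
        simp only [hμdef, hA]
        ring
      have hdiv : 0 ≤ f (fun τ => A s τ) / S₀ := div_nonneg hfb hS₀pos.le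
      rw [neg_div] at key
      linarith
  · -- easy direction: best response → not dominated
    rintro ⟨μ, hμ, hsupp, hBR⟩ ⟨m, hm, hdom⟩
    have h1 : G.EU i σ μ < ∑ τ, μ τ * G.EUmix i m τ := by
      rw [Game.EU]
      refine Finset.sum_lt_sum (fun τ _ => ?_) ?_
      · rcases eq_or_lt_of_le (hμ.1 τ) with h | h
        · rw [← h]; simp
        · exact mul_le_mul_of_nonneg_left (le_of_lt (hdom τ (hsupp τ h))) (hμ.1 τ)
      · obtain ⟨τ, -, hτ⟩ := Finset.exists_ne_zero_of_sum_ne_zero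
          (by rw [hμ.2]; norm_num : ∑ τ, μ τ ≠ 0)
        have hpos : 0 < μ τ := lt_of_le_of_ne (hμ.1 τ) (Ne.symm hτ)
        exact ⟨τ, Finset.mem_univ τ, mul_lt_mul_of_pos_left (hdom τ (hsupp τ hpos)) hpos⟩
    have h2 : ∑ τ, μ τ * G.EUmix i m τ = ∑ s, m s * G.EU i s μ := by
      simp only [Game.EUmix, Game.EU, Finset.mul_sum]
      rw [Finset.sum_comm]
      exact Finset.sum_congr rfl fun s _ => Finset.sum_congr rfl fun τ _ => by ring
    have h3 : ∑ s, m s * G.EU i s μ ≤ ∑ s, m s * G.EU i σ μ :=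
      Finset.sum_le_sum fun s _ => mul_le_mul_of_nonneg_left (hBR s) (hm.1 s)
    have h4 : ∑ s, m s * G.EU i σ μ = G.EU i σ μ := by
      rw [← Finset.sum_mul, hm.2, one_mul]
    linarith
end

section
/- Let Σ'_{-i} ⊆ Σ_{-i} be nonempty and let σ ∈ Σ_i. Then σ is not weakly dominated by any mixed strategy of player i with respect to Σ'_{-i} if and only if there exists a probability distribution μ on Σ_{-i} whose support is exactly Σ'_{-i} such that σ is a best response to μ. -/
open scoped BigOperators

/-! Undominatedness of `σ` says that the cone spanned by the gain vectors
`u(s, ·) - u(σ, ·)`, restricted to `T`, meets the nonnegative orthant only at `0`. Finitely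
generated cones are closed, so this cone can be strictly separated from the standard simplex; the
separating functional is positive on every coordinate and nonpositive on every gain vector, and
after normalization it is a belief with support `T` to which `σ` is a best response. Conversely,
averaging the dominance inequalities against such a belief shows that a dominating mixed strategy
would earn strictly more than `σ`. -/

section FiniteCone

variable {ι : Type*} [Fintype ι]

lemma exists_nonneg_apply_eq_zero_linearCombination_eq {𝕜 M : Type*} [Field 𝕜] [LinearOrder 𝕜]
    [IsStrictOrderedRing 𝕜] [AddCommGroup M] [Module 𝕜 M] {v : ι → M} {c : ι → 𝕜}
    (hc : Fintype.linearCombination 𝕜 v c = 0) (hpos : ∃ j, 0 < c j) {l : ι → 𝕜} (hl : 0 ≤ l) :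
    ∃ p, ∃ l' : ι → 𝕜, 0 ≤ l' ∧ l' p = 0 ∧
      Fintype.linearCombination 𝕜 v l' = Fintype.linearCombination 𝕜 v l := by
  classical
  obtain ⟨j₀, hj₀⟩ := hpos
  -- Move from `l` along `-c` until the first coordinate hits zero.
  obtain ⟨p, hp, hmin⟩ := ({j | 0 < c j} : Finset ι).exists_mem_eq_inf' ⟨j₀, by simpa using hj₀⟩
    (fun j => l j / c j)
  have hcp : 0 < c p := by simpa using hp
  set t := l p / c p
  have ht : 0 ≤ t := div_nonneg (hl p) hcp.le
  refine ⟨p, l - t • c, fun j => ?_, ?_, by simp [hc]⟩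
  · have hlj : 0 ≤ l j := hl j
    rcases le_or_gt (c j) 0 with hcj | hcj
    · simpa using (by nlinarith : t * c j ≤ l j)
    · have : t ≤ l j / c j := hmin ▸ Finset.inf'_le _ (by simpa using hcj)
      simpa [le_div_iff₀ hcj] using this
  · simp [t, div_mul_cancel₀ _ hcp.ne']

lemma Fintype.linearCombination_eq_subtype_ne {R M : Type*} [Semiring R] [AddCommMonoid M]
    [Module R M] [DecidableEq ι] (v : ι → M) {l : ι → R} {p : ι} (hp : l p = 0) :
    Fintype.linearCombination R v l =
      Fintype.linearCombination R (fun j : {j // j ≠ p} => v j.1) (fun j => l j) := by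
  simp [Fintype.linearCombination_apply, Fintype.sum_eq_add_sum_subtype_ne _ p, hp]

lemma image_Ici_linearCombination_eq_iUnion {𝕜 M : Type*} [Field 𝕜] [LinearOrder 𝕜]
    [IsStrictOrderedRing 𝕜] [AddCommGroup M] [Module 𝕜 M] [DecidableEq ι] {v : ι → M}
    {c : ι → 𝕜} (hc : Fintype.linearCombination 𝕜 v c = 0) (hpos : ∃ j, 0 < c j) :
    Fintype.linearCombination 𝕜 v '' Set.Ici 0 =
      ⋃ p, Fintype.linearCombination 𝕜 (fun j : {j // j ≠ p} => v j.1) '' Set.Ici 0 := by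
  ext x
  simp only [Set.mem_image, Set.mem_iUnion, Set.mem_Ici]
  constructor
  · rintro ⟨l, hl, rfl⟩
    obtain ⟨p, l', hl', hp, hl'l⟩ := exists_nonneg_apply_eq_zero_linearCombination_eq hc hpos hl
    exact ⟨p, fun j => l' j, fun j => hl' j,
      by rw [← hl'l, Fintype.linearCombination_eq_subtype_ne v hp]⟩
  · rintro ⟨p, l, hl, rfl⟩
    refine ⟨fun j => if h : j = p then 0 else l ⟨j, h⟩, fun j => ?_, ?_⟩
    · by_cases h : j = p
      · simp [h]
      · simpa [h] using hl ⟨j, h⟩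
    · rw [Fintype.linearCombination_eq_subtype_ne v (p := p) (by simp)]
      congr 1
      ext ⟨j, hj⟩
      simp [hj]

variable {F : Type*} [AddCommGroup F] [TopologicalSpace F] [IsTopologicalAddGroup F]
  [Module ℝ F] [ContinuousSMul ℝ F] [T2Space F]

lemma LinearIndependent.isClosed_image_Ici_linearCombination {v : ι → F}
    (hv : LinearIndependent ℝ v) : IsClosed (Fintype.linearCombination ℝ v '' Set.Ici 0) :=
  (LinearMap.isClosedEmbedding_of_injective
    (LinearMap.ker_eq_bot.2 hv.fintypeLinearCombination_injective)).isClosedMap _ isClosed_Ici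

/-- Finitely generated convex cones are closed. -/
theorem isClosed_image_Ici_linearCombination (v : ι → F) :
    IsClosed (Fintype.linearCombination ℝ v '' Set.Ici 0) := by
  classical
  induction h : Fintype.card ι using Nat.strong_induction_on generalizing ι with
  | _ n ih =>
    by_cases hv : LinearIndependent ℝ v
    · exact hv.isClosed_image_Ici_linearCombination
    obtain ⟨c, hc, j, hj⟩ := Fintype.not_linearIndependent_iff.1 hv
    obtain ⟨c, hc, hpos⟩ : ∃ c : ι → ℝ, Fintype.linearCombination ℝ v c = 0 ∧ ∃ j, 0 < c j := by
      rcases hj.lt_or_gt with hneg | hpos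
      · exact ⟨-c, by simpa [Fintype.linearCombination_apply] using hc, j, by simpa using hneg⟩
      · exact ⟨c, by simpa [Fintype.linearCombination_apply] using hc, j, hpos⟩
    rw [image_Ici_linearCombination_eq_iUnion hc hpos]
    refine isClosed_iUnion_of_finite fun p => ih _ ?_ _ rfl
    have : 0 < n := h ▸ Fintype.card_pos_iff.2 ⟨p⟩
    simp only [← h, ne_eq, Fintype.card_subtype_compl, Fintype.card_unique]
    omega

end FiniteCone

lemma isDist_div_sum {α : Type*} [Fintype α] {p : α → ℝ} (hp : 0 ≤ p) (hsum : 0 < ∑ a, p a) :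
    IsDist fun a => p a / ∑ b, p b :=
  ⟨fun a => div_nonneg (hp a) hsum.le, by rw [← Finset.sum_div, div_self hsum.ne']⟩

section Alternative

variable {ι κ : Type*} [Fintype ι] [Fintype κ]

lemma le_zero_of_smul_mem_of_lt {E : Type*} [AddCommGroup E] [Module ℝ E] {K : Set E}
    (hK : ∀ x ∈ K, ∀ t : ℝ, 0 < t → t • x ∈ K) {f : E →ₗ[ℝ] ℝ} {u : ℝ} (hf : ∀ x ∈ K, f x < u)
    {x : E} (hx : x ∈ K) : f x ≤ 0 := by
  by_contra! hpos
  have hu : 0 < u := hpos.trans (hf x hx)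
  have := hf _ (hK x hx (u / f x) (by positivity))
  rw [map_smul, smul_eq_mul, div_mul_cancel₀ _ hpos.ne'] at this
  exact this.false

/-- A theorem of the alternative of Stiemke type. -/
theorem exists_pos_dotProduct_nonpos (w : ι → κ → ℝ)
    (h : ∀ l : ι → ℝ, 0 ≤ l → 0 ≤ Fintype.linearCombination ℝ w l →
      Fintype.linearCombination ℝ w l = 0) :
    ∃ μ : κ → ℝ, (∀ τ, 0 < μ τ) ∧ ∀ s, μ ⬝ᵥ w s ≤ 0 := by
  classical
  set K := Fintype.linearCombination ℝ w '' Set.Ici 0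
  have hdisj : Disjoint K (stdSimplex ℝ κ) := by
    rw [Set.disjoint_left]
    rintro _ ⟨l, hl, rfl⟩ hmem
    have hzero := h l hl hmem.1
    simpa [hzero] using hmem.2
  obtain ⟨f, u, v, hfK, huv, hfΔ⟩ := geometric_hahn_banach_closed_compact
    ((convex_Ici 0).linear_image _) (isClosed_image_Ici_linearCombination w)
    (convex_stdSimplex ℝ κ) (isCompact_stdSimplex ℝ κ) hdisj
  have hK : ∀ x ∈ K, ∀ t : ℝ, 0 < t → t • x ∈ K := by
    rintro _ ⟨l, hl, rfl⟩ t ht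
    exact ⟨t • l, smul_nonneg ht.le (Set.mem_Ici.1 hl), map_smul _ _ _⟩
  have hu : 0 < u := by simpa using hfK 0 ⟨0, Set.mem_Ici.2 le_rfl, map_zero _⟩
  refine ⟨fun τ => f (if τ = · then 1 else 0), fun τ => ?_, fun s => ?_⟩
  · linarith [hfΔ _ (ite_eq_mem_stdSimplex ℝ τ)]
  · have hws : w s ∈ K := ⟨Pi.single s 1, Pi.single_nonneg.2 zero_le_one, by simp⟩
    calc _ = f (w s) := by
          rw [← f.coe_coe, f.toLinearMap.pi_apply_eq_sum_univ, dotProduct]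
          simp [mul_comm]
      _ ≤ 0 := le_zero_of_smul_mem_of_lt hK (f := f.toLinearMap) hfK hws

theorem exists_isDist_support_eq_sum_mul_nonpos (w : ι → κ → ℝ) {T : Set κ} (hT : T.Nonempty)
    (h : ∀ l : ι → ℝ, 0 ≤ l → (∀ τ ∈ T, 0 ≤ ∑ s, l s * w s τ) → ∀ τ ∈ T, ∑ s, l s * w s τ = 0) :
    ∃ μ : κ → ℝ, IsDist μ ∧ (∀ τ, 0 < μ τ ↔ τ ∈ T) ∧ ∀ s, ∑ τ, μ τ * w s τ ≤ 0 := by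
  classical
  have hlc : ∀ (l : ι → ℝ) (τ : T),
      Fintype.linearCombination ℝ (fun s (τ : T) => w s τ) l τ = ∑ s, l s * w s τ := by
    simp [Fintype.linearCombination_apply]
  obtain ⟨ν, hν, hνw⟩ := exists_pos_dotProduct_nonpos (fun s (τ : T) => w s τ) fun l hl hge => by
    ext τ
    simpa [hlc] using h l hl (fun τ hτ => by simpa [hlc] using hge ⟨τ, hτ⟩) τ τ.2
  set ν₀ : κ → ℝ := fun τ => if hτ : τ ∈ T then ν ⟨τ, hτ⟩ else 0
  have hν₀ : ∀ x : κ → ℝ, ∑ τ, ν₀ τ * x τ = ∑ τ : T, ν τ * x τ := by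
    intro x
    have hout : ∑ τ : {τ // τ ∉ T}, ν₀ τ * x τ = 0 :=
      Finset.sum_eq_zero fun τ _ => by simp [ν₀, τ.2]
    rw [← Fintype.sum_subtype_add_sum_subtype (· ∈ T), hout, add_zero]
    exact Finset.sum_congr rfl fun τ _ => by simp [ν₀, τ.2]
  have hsum : 0 < ∑ τ, ν₀ τ := by
    have := hT.to_subtype
    rw [show ∑ τ, ν₀ τ = ∑ τ : T, ν τ by simpa using hν₀ 1]
    exact Finset.sum_pos (fun τ _ => hν τ) Finset.univ_nonempty
  refine ⟨fun τ => ν₀ τ / ∑ τ', ν₀ τ', isDist_div_sum (fun τ => ?_) hsum, fun τ => ?_, fun s => ?_⟩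
  · by_cases hτ : τ ∈ T <;> simp [ν₀, hτ, (hν _).le]
  · by_cases hτ : τ ∈ T <;> simp [ν₀, hτ, hν, hsum]
  · simp_rw [div_mul_eq_mul_div, ← Finset.sum_div, hν₀ (w s)]
    exact div_nonpos_of_nonpos_of_nonneg (hνw s) hsum.le

end Alternative

namespace Game

variable {n : ℕ} (G : Game n) (i : Fin n)

lemma EU_sub_EU (s σ : G.S i) (μ : G.OppProf i → ℝ) :
    G.EU i s μ - G.EU i σ μ =
      ∑ τ, μ τ * (G.u i (G.combine i s τ) - G.u i (G.combine i σ τ)) := by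
  simp only [EU, mul_sub, Finset.sum_sub_distrib]

lemma EUmix_sub_of_isDist {m : G.S i → ℝ} (hm : IsDist m) (σ : G.S i) (τ : G.OppProf i) :
    G.EUmix i m τ - G.u i (G.combine i σ τ) =
      ∑ s, m s * (G.u i (G.combine i s τ) - G.u i (G.combine i σ τ)) := by
  simp only [EUmix, mul_sub, Finset.sum_sub_distrib, ← Finset.sum_mul, hm.2, one_mul]

lemma sum_mul_EUmix (m : G.S i → ℝ) (μ : G.OppProf i → ℝ) :
    ∑ τ, μ τ * G.EUmix i m τ = ∑ s, m s * G.EU i s μ := by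
  simp only [EUmix, EU, Finset.mul_sum]
  rw [Finset.sum_comm]
  exact Finset.sum_congr rfl fun s _ => Finset.sum_congr rfl fun τ _ => by ring

variable {G i}

theorem not_WDom_of_BR {T : Set (G.OppProf i)} {σ : G.S i} {μ : G.OppProf i → ℝ} (hμ : IsDist μ)
    (hsupp : ∀ τ, 0 < μ τ ↔ τ ∈ T) (hBR : G.BR i σ μ) {m : G.S i → ℝ} (hm : IsDist m) :
    ¬G.WDom i m σ T := by
  rintro ⟨hge, τ₀, hτ₀, hlt⟩
  have hgain : 0 < ∑ τ, μ τ * (G.EUmix i m τ - G.u i (G.combine i σ τ)) := by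
    refine Finset.sum_pos' (fun τ _ => ?_)
      ⟨τ₀, Finset.mem_univ _, mul_pos ((hsupp τ₀).2 hτ₀) (sub_pos.2 hlt)⟩
    by_cases hτ : τ ∈ T
    · exact mul_nonneg (hμ.1 τ) (sub_nonneg.2 (hge τ hτ))
    · simp [le_antisymm (not_lt.1 (mt (hsupp τ).1 hτ)) (hμ.1 τ)]
  have hloss : ∑ τ, μ τ * (G.EUmix i m τ - G.u i (G.combine i σ τ)) =
      ∑ s, m s * (G.EU i s μ - G.EU i σ μ) := by
    simp only [mul_sub, Finset.sum_sub_distrib, sum_mul_EUmix, ← Finset.sum_mul, hm.2, one_mul]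
    rfl
  have : ∑ s, m s * (G.EU i s μ - G.EU i σ μ) ≤ 0 :=
    Finset.sum_nonpos fun s _ => mul_nonpos_of_nonneg_of_nonpos (hm.1 s) (sub_nonpos.2 (hBR s))
  linarith

theorem exists_WDom_of_sum_mul_nonneg {T : Set (G.OppProf i)} {σ : G.S i} {l : G.S i → ℝ}
    (hl : 0 ≤ l)
    (hge : ∀ τ ∈ T, 0 ≤ ∑ s, l s * (G.u i (G.combine i s τ) - G.u i (G.combine i σ τ)))
    {τ₀ : G.OppProf i} (hτ₀ : τ₀ ∈ T)
    (hlt : 0 < ∑ s, l s * (G.u i (G.combine i s τ₀) - G.u i (G.combine i σ τ₀))) :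
    ∃ m, IsDist m ∧ G.WDom i m σ T := by
  have hZ : 0 < ∑ s, l s := by
    refine (Finset.sum_nonneg fun s _ => hl s).lt_of_ne fun hZ => hlt.ne' ?_
    have hl0 := (Finset.sum_eq_zero_iff_of_nonneg fun s _ => hl s).1 hZ.symm
    exact Finset.sum_eq_zero fun s hs => by rw [hl0 s hs, zero_mul]
  have hm := isDist_div_sum hl hZ
  have hgain : ∀ τ, G.EUmix i (fun s => l s / ∑ s', l s') τ - G.u i (G.combine i σ τ) =
      (∑ s, l s * (G.u i (G.combine i s τ) - G.u i (G.combine i σ τ))) / ∑ s, l s := by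
    intro τ
    simp_rw [G.EUmix_sub_of_isDist i hm, div_mul_eq_mul_div, ← Finset.sum_div]
  refine ⟨_, hm, fun τ hτ => ?_, τ₀, hτ₀, ?_⟩
  · exact sub_nonneg.1 (hgain τ ▸ div_nonneg (hge τ hτ) hZ.le)
  · exact sub_pos.1 (hgain τ₀ ▸ div_pos hlt hZ)

end Game

/-- Pearce: `σ` is not weakly dominated by any mixed strategy with respect
to a nonempty `T ⊆ Σ_{-i}` iff it is a best response to some belief with support exactly `T`. -/
theorem not_weakly_dominated_iff_best_response_full_support {n : ℕ} (G : Game n) (i : Fin n)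
    (T : Set (G.OppProf i)) (hT : T.Nonempty) (σ : G.S i) :
    (¬∃ m : G.S i → ℝ, IsDist m ∧ G.WDom i m σ T) ↔
      ∃ μ : G.OppProf i → ℝ, IsDist μ ∧ (∀ τ, 0 < μ τ ↔ τ ∈ T) ∧ G.BR i σ μ := by
  constructor
  · intro hundom
    obtain ⟨μ, hμ, hsupp, hμgain⟩ := exists_isDist_support_eq_sum_mul_nonpos
      (fun s τ => G.u i (G.combine i s τ) - G.u i (G.combine i σ τ)) hT
      fun l hl hge τ hτ => by_contra fun hne =>
        hundom (Game.exists_WDom_of_sum_mul_nonneg hl hge hτ ((hge τ hτ).lt_of_ne' hne))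
    exact ⟨μ, hμ, hsupp, fun s => sub_nonpos.1 (G.EU_sub_EU i s σ μ ▸ hμgain s)⟩
  · rintro ⟨μ, hμ, hsupp, hBR⟩ ⟨m, hm, hdom⟩
    exact Game.not_WDom_of_BR hμ hsupp hBR hm hdom
end

section
/- Let Σ' = Σ'_i × Σ'_{-i} ⊆ Σ and σ ∈ Σ'_i. Then σ is conditionally dominated' on Σ' if and only if σ is conditionally dominated on Σ'. -/
open scoped BigOperators

noncomputable section

/-- A lexicographic probability sequence on a finite type. -/
structure LPS (Ω : Type*) [Fintype Ω] where
  m : ℕ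
  μ : Fin (m + 1) → Ω → ℝ
  dist : ∀ ℓ, IsDist (μ ℓ)

namespace LPS

variable {Ω : Type*} [Fintype Ω]

open Classical in
/-- `(μ⃗(V | E))₀`: the conditional probability of `V` given `E` under the first measure
of the LPS that gives `E` positive probability (0 if there is none). -/
def condFirst (L : LPS Ω) (V E : Set Ω) : ℝ :=
  if h : ∃ ℓ : ℕ, ∃ hℓ : ℓ < L.m + 1, 0 < probOf (L.μ ⟨ℓ, hℓ⟩) E then
    probOf (L.μ ⟨Nat.find h, (Nat.find_spec h).choose⟩) (V ∩ E) /
      probOf (L.μ ⟨Nat.find h, (Nat.find_spec h).choose⟩) E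
  else 0

/-- Expectation of `f` under the first measure of `μ⃗|E`. -/
def condExp (L : LPS Ω) (E : Set Ω) (f : Ω → ℝ) : ℝ :=
  ∑ a, L.condFirst {a} E * f a

end LPS

/-- The experience of player `i` along a history: the sequence of information-set labels of
`i` visited together with the actions `i` took there. `experGo owner label i pre rest`
processes the history `pre ++ rest`, where `pre` has already been traversed. -/
def experGo {Act Lab ι : Type*} [DecidableEq ι] (owner : List Act → ι)
    (label : List Act → Lab) (i : ι) : List Act → List Act → List (Lab × Act)
  | _, [] => []
  | pre, a :: rest =>
      (if owner pre = i then [(label pre, a)] else []) ++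
        experGo owner label i (pre ++ [a]) rest

/-- A finite extensive-form game with perfect recall for `n` players and no chance moves,
presented via its set of histories (sequences of actions from the root). `owner h` is the
player who moves at a nonterminal history `h`, `label h` is the information set containing
`h`, and `payoff i h` is `i`'s utility at a terminal history `h`. -/
structure ExtGame (n : ℕ) where
  Act : Type
  Lab : Type
  actFin : Fintype Act
  actDeq : DecidableEq Act
  actNe : Nonempty Act
  labFin : Fintype Lab
  labDeq : DecidableEq Lab
  maxLen : ℕ
  H : Set (List Act)
  root_mem : [] ∈ H
  prefix_closed : ∀ (h : List Act) (a : Act), h ++ [a] ∈ H → h ∈ H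
  len_bound : ∀ h ∈ H, h.length ≤ maxLen
  owner : List Act → Fin n
  label : List Act → Lab
  payoff : Fin n → List Act → ℝ
  payoff_mem : ∀ (i : Fin n) (h : List Act), h ∈ H → (∀ a, h ++ [a] ∉ H) →
    payoff i h ∈ Set.Icc (0 : ℝ) 1
  same_owner : ∀ h h', h ∈ H → h' ∈ H → (∃ a, h ++ [a] ∈ H) → (∃ a, h' ++ [a] ∈ H) →
    label h = label h' → owner h = owner h'
  same_actions : ∀ h h', h ∈ H → h' ∈ H → (∃ a, h ++ [a] ∈ H) → (∃ a, h' ++ [a] ∈ H) →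
    label h = label h' → ∀ a, (h ++ [a] ∈ H ↔ h' ++ [a] ∈ H)
  no_two_on_path : ∀ h h', h ∈ H → h' ∈ H → (∃ a, h ++ [a] ∈ H) → (∃ a, h' ++ [a] ∈ H) →
    label h = label h' → h <+: h' → h = h'
  perfect_recall : ∀ h h', h ∈ H → h' ∈ H → (∃ a, h ++ [a] ∈ H) → (∃ a, h' ++ [a] ∈ H) →
    label h = label h' →
    experGo owner label (owner h) [] h = experGo owner label (owner h) [] h'

attribute [instance] ExtGame.actFin ExtGame.actDeq ExtGame.actNe ExtGame.labFin
  ExtGame.labDeq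

namespace ExtGame

variable {n : ℕ}

/-- `h` is a decision node. -/
def Dec (G : ExtGame n) (h : List G.Act) : Prop := h ∈ G.H ∧ ∃ a, h ++ [a] ∈ G.H

/-- `h` is a decision node of player `i`. -/
def DecOf (G : ExtGame n) (i : Fin n) (h : List G.Act) : Prop := G.Dec h ∧ G.owner h = i

/-- `c` is (the label of) an information set of player `i`. -/
def IsInfo (G : ExtGame n) (i : Fin n) (c : G.Lab) : Prop :=
  ∃ h, G.DecOf i h ∧ G.label h = c

/-- A pure strategy of player `i`: an assignment of an available action to each
information set of `i`. -/
def PStrat (G : ExtGame n) (i : Fin n) : Type :=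
  {s : G.Lab → G.Act // ∀ h, G.DecOf i h → h ++ [s (G.label h)] ∈ G.H}

instance (G : ExtGame n) (i : Fin n) : Finite (G.PStrat i) := Subtype.finite

noncomputable instance (G : ExtGame n) (i : Fin n) : Fintype (G.PStrat i) :=
  Fintype.ofFinite _

noncomputable instance (G : ExtGame n) (i : Fin n) : DecidableEq (G.PStrat i) :=
  Classical.decEq _

/-- Opponents' pure-strategy profiles. -/
abbrev OppProf (G : ExtGame n) (i : Fin n) : Type :=
  (j : {j : Fin n // j ≠ i}) → G.PStrat j.val

/-- Combining a strategy for `i` with an opponents' profile. -/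
def combine (G : ExtGame n) (i : Fin n) (s : G.PStrat i) (τ : G.OppProf i) :
    (j : Fin n) → G.PStrat j :=
  fun j => if h : j = i then cast (congrArg G.PStrat h.symm) s else τ ⟨j, h⟩

open Classical in
/-- The play of the game from history `h` under profile `sp`, with fuel `f`. -/
def playFrom (G : ExtGame n) (sp : (j : Fin n) → G.PStrat j) :
    ℕ → List G.Act → List G.Act
  | 0, h => h
  | f + 1, h =>
      if G.Dec h then
        G.playFrom sp f (h ++ [(sp (G.owner h)).val (G.label h)])
      else h

/-- The terminal history reached by the profile `sp`. -/
def outcome (G : ExtGame n) (sp : (j : Fin n) → G.PStrat j) : List G.Act :=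
  G.playFrom sp (G.maxLen + 1) []

/-- Player `i`'s utility under the profile `sp`. -/
def U (G : ExtGame n) (i : Fin n) (sp : (j : Fin n) → G.PStrat j) : ℝ :=
  G.payoff i (G.outcome sp)

/-- The profile `sp` reaches the information set `c` of player `i`. -/
def Reaches (G : ExtGame n) (sp : (j : Fin n) → G.PStrat j) (i : Fin n) (c : G.Lab) :
    Prop :=
  ∃ p, p <+: G.outcome sp ∧ G.DecOf i p ∧ G.label p = c

/-- `Σ'_{σ,I,-i}`: the opponents' profiles in `T` for which `(σ, τ₋ᵢ)` reaches `c`. -/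
def ReachSet (G : ExtGame n) (i : Fin n) (σ : G.PStrat i) (c : G.Lab)
    (T : Set (G.OppProf i)) : Set (G.OppProf i) :=
  {τ ∈ T | G.Reaches (G.combine i σ τ) i c}

/-- `Σ'_{σ,σ',I,-i}` for a mixed strategy `m`. -/
def ReachSetMix (G : ExtGame n) (i : Fin n) (σ : G.PStrat i) (m : G.PStrat i → ℝ)
    (c : G.Lab) (T : Set (G.OppProf i)) : Set (G.OppProf i) :=
  {τ ∈ T | G.Reaches (G.combine i σ τ) i c ∧
    ∀ s, 0 < m s → G.Reaches (G.combine i s τ) i c}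

/-- Utility of the mixed strategy `m` of player `i` against the opponents' profile `τ`. -/
def EUmixE (G : ExtGame n) (i : Fin n) (m : G.PStrat i → ℝ) (τ : G.OppProf i) : ℝ :=
  ∑ s : G.PStrat i, m s * G.U i (G.combine i s τ)

/-- `σ` is conditionally dominated on `Σ'_i × T`. -/
def CondDom (G : ExtGame n) (i : Fin n) (σ : G.PStrat i) (T : Set (G.OppProf i)) :
    Prop :=
  ∃ c, G.IsInfo i c ∧ ∃ m : G.PStrat i → ℝ, IsDist m ∧
    (G.ReachSetMix i σ m c T).Nonempty ∧
    ∀ τ ∈ G.ReachSetMix i σ m c T, G.U i (G.combine i σ τ) < G.EUmixE i m τ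

/-- The information set `c'` of player `i` is at or below `c`. -/
def AtOrBelow (G : ExtGame n) (i : Fin n) (c' c : G.Lab) : Prop :=
  ∃ h h', G.DecOf i h ∧ G.DecOf i h' ∧ G.label h' = c ∧ G.label h = c' ∧ h' <+: h

/-- The information set `c'` of player `i` precedes `c`. -/
def Precedes (G : ExtGame n) (i : Fin n) (c' c : G.Lab) : Prop :=
  ∃ h h', G.DecOf i h ∧ G.DecOf i h' ∧ G.label h = c' ∧ G.label h' = c ∧
    h <+: h' ∧ h ≠ h'

/-- `σ` is conditionally dominated′ on `Σ'_i × T`. -/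
def CondDom' (G : ExtGame n) (i : Fin n) (σ : G.PStrat i) (T : Set (G.OppProf i)) :
    Prop :=
  ∃ c, G.IsInfo i c ∧ (G.ReachSet i σ c T).Nonempty ∧
    ∃ m : G.PStrat i → ℝ, IsDist m ∧
      (∀ s, 0 < m s → ∀ c', G.IsInfo i c' → ¬G.AtOrBelow i c' c →
        s.val c' = σ.val c') ∧
      ∀ τ ∈ G.ReachSet i σ c T, G.U i (G.combine i σ τ) < G.EUmixE i m τ

/-- `σ` is weakly dominated by the mixed strategy `m` with respect to `T`. -/
def WDomE (G : ExtGame n) (i : Fin n) (m : G.PStrat i → ℝ) (σ : G.PStrat i)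
    (T : Set (G.OppProf i)) : Prop :=
  (∀ τ ∈ T, G.U i (G.combine i σ τ) ≤ G.EUmixE i m τ) ∧
    ∃ τ ∈ T, G.U i (G.combine i σ τ) < G.EUmixE i m τ

/-- `σ` is an almost-best response conditional on reaching the information set `c` to the
first measure of `L | E`. -/
def AlmostBestAt (G : ExtGame n) (i : Fin n) (σ : G.PStrat i) (c : G.Lab)
    (L : LPS (G.OppProf i)) (E : Set (G.OppProf i)) : Prop :=
  ∀ σ' : G.PStrat i,
    (∀ c', G.IsInfo i c' → G.Precedes i c' c → σ'.val c' = σ.val c') →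
    L.condExp E (fun τ => G.U i (G.combine i σ' τ)) ≤
      L.condExp E (fun τ => G.U i (G.combine i σ τ))

end ExtGame

end

/-!
Perfect recall is what makes the two notions agree. If `σ` reaches a node `p` of `I` against
`τ₋ᵢ`, no information set of `i` met strictly before `p` lies at or below `I`, so every
strategy that agrees with `σ` off the part of the tree at or below `I` reaches `p` as well; hence
for the dominating strategy of conditional dominance′ the sets `Σ'_{σ,I,-i}` and
`Σ'_{σ,σ',I,-i}` coincide. Conversely, if each `s` in the support of `σ'` reaches `I` against
some `τ₀`, perfect recall forces `s` to agree with `σ` at all moves of `i` leading to `I`, so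
against every `τ₋ᵢ ∈ Σ'_{σ,I,-i}` it reaches the same node of `I` as `σ`. Replacing `s` by the
strategy playing `s` at or below `I` and `σ` elsewhere then leaves all these outcomes unchanged,
and the image of `σ'` under this replacement witnesses conditional dominance′.
-/

theorem List.exists_concat_prefix_of_prefix_of_ne {α : Type*} {l₁ l₂ : List α}
    (h : l₁ <+: l₂) (hne : l₁ ≠ l₂) : ∃ a, l₁ ++ [a] <+: l₂ := by
  obtain ⟨_ | ⟨a, t⟩, rfl⟩ := h
  · simp at hne
  · exact ⟨a, t, by simp⟩

theorem List.length_lt_of_concat_prefix {α : Type*} {l₁ l₂ : List α} {a : α}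
    (h : l₁ ++ [a] <+: l₂) : l₁.length < l₂.length := by
  simpa using h.length_le

theorem mem_experGo {Act Lab ι : Type*} [DecidableEq ι] (owner : List Act → ι)
    (label : List Act → Lab) (i : ι) (pre rest : List Act) (x : Lab × Act) :
    x ∈ experGo owner label i pre rest ↔
      ∃ q a, q ++ [a] <+: rest ∧ owner (pre ++ q) = i ∧ x = (label (pre ++ q), a) := by
  induction rest generalizing pre with
  | nil => simp [experGo]
  | cons b rest ih =>
    simp only [experGo, List.mem_append, ih, List.prefix_cons_iff]
    constructor
    · rintro (hx | ⟨q, a, hq, ho, rfl⟩)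
      · split_ifs at hx with ho
        · exact ⟨[], b, by simp, by simpa using ho, by simpa using hx⟩
        · simp at hx
      · exact ⟨b :: q, a, by simpa using hq, by simpa using ho, by simp⟩
    · rintro ⟨q, a, hq | ⟨t, hqt, ht⟩, ho, rfl⟩
      · simp at hq
      · cases q with
        | nil =>
          obtain ⟨rfl, -⟩ := List.cons.inj hqt
          left
          simp only [List.append_nil] at ho ⊢
          simp [ho]
        | cons c q =>
          obtain ⟨rfl, rfl⟩ := List.cons.inj hqt
          exact Or.inr ⟨q, a, ht, by simpa using ho, by simp⟩

section distMap

variable {α β : Type*} [Fintype α] [DecidableEq β]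

def distMap (f : α → β) (p : α → ℝ) (b : β) : ℝ :=
  ∑ a with f a = b, p a

theorem IsDist.map [Fintype β] {p : α → ℝ} (hp : IsDist p) (f : α → β) :
    IsDist (distMap f p) :=
  ⟨fun _ => Finset.sum_nonneg fun a _ => hp.1 a, by
    unfold distMap; rw [Finset.sum_fiberwise]; exact hp.2⟩

theorem sum_distMap_mul [Fintype β] (f : α → β) (p : α → ℝ) (g : β → ℝ) :
    ∑ b, distMap f p b * g b = ∑ a, p a * g (f a) := calc
  _ = ∑ b, ∑ a with f a = b, p a * g (f a) := by
    refine Finset.sum_congr rfl fun b _ => ?_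
    rw [distMap, Finset.sum_mul]
    exact Finset.sum_congr rfl fun a ha => by rw [(Finset.mem_filter.mp ha).2]
  _ = _ := Finset.sum_fiberwise _ _ _

theorem exists_pos_of_distMap_pos {f : α → β} {p : α → ℝ} {b : β}
    (h : 0 < distMap f p b) : ∃ a, 0 < p a ∧ f a = b := by
  obtain ⟨a, ha, hpos⟩ := Finset.exists_lt_of_sum_lt (f := 0) (g := p)
    (by simpa [distMap] using h)
  exact ⟨a, hpos, (Finset.mem_filter.mp ha).2⟩

end distMap

namespace ExtGame

variable {n : ℕ} (G : ExtGame n)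

theorem mem_H_of_prefix {p q : List G.Act} (hp : p ∈ G.H) (hq : q <+: p) : q ∈ G.H := by
  obtain ⟨t, rfl⟩ := hq
  induction t using List.reverseRecOn with
  | nil => simpa using hp
  | append_singleton t a ih => exact ih (G.prefix_closed _ a (by simpa using hp))

theorem dec_of_concat_prefix {p q : List G.Act} {a : G.Act} (hp : p ∈ G.H)
    (hq : q ++ [a] <+: p) : G.Dec q :=
  ⟨G.mem_H_of_prefix hp ((List.prefix_append q [a]).trans hq), a, G.mem_H_of_prefix hp hq⟩

theorem not_concat_prefix_of_label_eq {p q : List G.Act} {a : G.Act} (dp : G.Dec p)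
    (hl : G.label q = G.label p) : ¬q ++ [a] <+: p := fun hq =>
  have dq := G.dec_of_concat_prefix dp.1 hq
  have := G.no_two_on_path q p dq.1 dp.1 dq.2 dp.2 hl ((List.prefix_append q [a]).trans hq)
  (List.length_lt_of_concat_prefix hq).ne (congrArg List.length this)

def Follows (sp : (j : Fin n) → G.PStrat j) (p : List G.Act) : Prop :=
  ∀ q a, q ++ [a] <+: p → a = (sp (G.owner q)).val (G.label q)

variable {G} {sp sp' : (j : Fin n) → G.PStrat j}

theorem Follows.mono {p p' : List G.Act} (hf : G.Follows sp p') (hp : p <+: p') :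
    G.Follows sp p :=
  fun q a hq => hf q a (hq.trans hp)

theorem Follows.concat {p : List G.Act} (hf : G.Follows sp p) :
    G.Follows sp (p ++ [(sp (G.owner p)).val (G.label p)]) := by
  intro q a hq
  rcases List.prefix_concat_iff.mp hq with heq | hq
  · obtain ⟨rfl, ha⟩ := List.append_inj' heq rfl
    simpa using ha
  · exact hf q a hq

theorem Follows.prefix_of_length_le {p p' : List G.Act} (hf : G.Follows sp p)
    (hf' : G.Follows sp p') (hl : p.length ≤ p'.length) : p <+: p' := by
  induction p using List.reverseRecOn with
  | nil => exact List.nil_prefix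
  | append_singleton q a ih =>
    have hq := ih (hf.mono (List.prefix_append q [a]))
      (by simp only [List.length_append, List.length_singleton] at hl; omega)
    obtain ⟨b, hb⟩ := List.exists_concat_prefix_of_prefix_of_ne hq
      (fun h => by simp [h] at hl)
    rwa [hf q a List.prefix_rfl, ← hf' q b hb]

theorem Follows.prefix_of_terminal {p t : List G.Act} (hp : p ∈ G.H)
    (hfp : G.Follows sp p) (hft : G.Follows sp t) (ht : ∀ a, t ++ [a] ∉ G.H) : p <+: t := by
  rcases le_total p.length t.length with hl | hl
  · exact hfp.prefix_of_length_le hft hl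
  · obtain rfl | hne := eq_or_ne t p
    · exact List.prefix_rfl
    · obtain ⟨a, ha⟩ := List.exists_concat_prefix_of_prefix_of_ne
        (hft.prefix_of_length_le hfp hl) hne
      exact absurd (G.mem_H_of_prefix hp ha) (ht a)

theorem playFrom_mem {h : List G.Act} (hh : h ∈ G.H) (f : ℕ) : G.playFrom sp f h ∈ G.H := by
  induction f generalizing h with
  | zero => exact hh
  | succ f ih =>
    rw [playFrom]
    split_ifs with hd
    · exact ih ((sp (G.owner h)).2 h ⟨hd, rfl⟩)
    · exact hh

theorem length_playFrom_of_dec {h : List G.Act} {f : ℕ} (hd : G.Dec (G.playFrom sp f h)) :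
    (G.playFrom sp f h).length = h.length + f := by
  induction f generalizing h with
  | zero => rfl
  | succ f ih =>
    rw [playFrom] at hd ⊢
    split_ifs at hd ⊢
    · rw [ih hd, List.length_append, List.length_singleton]
      omega
    · contradiction

theorem Follows.playFrom {h : List G.Act} (hf : G.Follows sp h) (f : ℕ) :
    G.Follows sp (G.playFrom sp f h) := by
  induction f generalizing h with
  | zero => exact hf
  | succ f ih =>
    rw [ExtGame.playFrom]
    split_ifs
    · exact ih hf.concat
    · exact hf

theorem outcome_mem : G.outcome sp ∈ G.H :=
  playFrom_mem G.root_mem _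

theorem follows_outcome : G.Follows sp (G.outcome sp) :=
  Follows.playFrom (fun _ _ hq => absurd hq.length_le (by simp)) _

theorem outcome_terminal (a : G.Act) : G.outcome sp ++ [a] ∉ G.H := fun ha => by
  have hlen := length_playFrom_of_dec (sp := sp) (h := []) ⟨outcome_mem, a, ha⟩
  have := G.len_bound _ (outcome_mem (sp := sp))
  simp only [outcome, List.length_nil] at this hlen
  omega

theorem prefix_outcome_of_follows {p : List G.Act} (hp : p ∈ G.H) (hf : G.Follows sp p) :
    p <+: G.outcome sp :=
  hf.prefix_of_terminal hp follows_outcome outcome_terminal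

theorem outcome_eq_of_agree_from {p : List G.Act} (hp : p <+: G.outcome sp)
    (hp' : p <+: G.outcome sp')
    (hag : ∀ q, p <+: q → G.Dec q →
      (sp (G.owner q)).val (G.label q) = (sp' (G.owner q)).val (G.label q)) :
    G.outcome sp' = G.outcome sp := by
  have hf : G.Follows sp (G.outcome sp') := by
    intro q a hq
    rcases List.prefix_or_prefix_of_prefix hq hp' with hqp | hpq
    · exact follows_outcome q a (hqp.trans hp)
    · rcases List.prefix_concat_iff.mp hpq with rfl | hpq
      · exact follows_outcome q a hp
      · rw [follows_outcome q a hq]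
        exact (hag q hpq (G.dec_of_concat_prefix outcome_mem hq)).symm
  have := hf.prefix_of_terminal outcome_mem follows_outcome outcome_terminal
  by_contra hne
  obtain ⟨a, ha⟩ := List.exists_concat_prefix_of_prefix_of_ne this hne
  exact outcome_terminal a (G.mem_H_of_prefix outcome_mem ha)

variable {i : Fin n}

theorem exists_concat_prefix_of_label_eq {p p' q : List G.Act} {a : G.Act}
    (dp : G.DecOf i p) (dp' : G.Dec p') (hl : G.label p = G.label p')
    (hq : q ++ [a] <+: p) (ho : G.owner q = i) :
    ∃ q', q' ++ [a] <+: p' ∧ G.owner q' = i ∧ G.label q' = G.label q := by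
  have hexp := G.perfect_recall p p' dp.1.1 dp'.1 dp.1.2 dp'.2 hl
  have hmem := (mem_experGo G.owner G.label (G.owner p) [] p _).mpr
    ⟨q, a, hq, by simpa [dp.2] using ho, rfl⟩
  rw [hexp, mem_experGo] at hmem
  obtain ⟨q', a', hq', ho', hx⟩ := hmem
  simp only [List.nil_append, Prod.mk.injEq] at ho' hx
  obtain ⟨hlq, rfl⟩ := hx
  exact ⟨q', hq', ho'.trans dp.2, hlq.symm⟩

theorem not_atOrBelow_of_concat_prefix {p q : List G.Act} {a : G.Act} (dp : G.DecOf i p)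
    (hq : q ++ [a] <+: p) : ¬G.AtOrBelow i (G.label q) (G.label p) := by
  rintro ⟨g, r, dg, dr, hr, hg, hrg⟩
  obtain rfl | hne := eq_or_ne r g
  · exact G.not_concat_prefix_of_label_eq dp.1 (hg.symm.trans hr) hq
  · obtain ⟨b, hb⟩ := List.exists_concat_prefix_of_prefix_of_ne hrg hne
    obtain ⟨q', hq', -, hl'⟩ :=
      exists_concat_prefix_of_label_eq dg (G.dec_of_concat_prefix dp.1.1 hq) hg hb dr.2
    exact G.not_concat_prefix_of_label_eq dp.1 (hl'.trans hr)
      (hq'.trans ((List.prefix_append q [a]).trans hq))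

variable {σ s : G.PStrat i} {τ τ' : G.OppProf i} {p : List G.Act}

theorem combine_self (τ : G.OppProf i) : G.combine i s τ i = s := by
  simp [combine]

theorem combine_apply_owner_eq {s' : G.PStrat i} {q : List G.Act}
    (h : G.owner q = i → s.val (G.label q) = s'.val (G.label q)) :
    (G.combine i s τ (G.owner q)).val (G.label q) =
      (G.combine i s' τ (G.owner q)).val (G.label q) := by
  by_cases ho : G.owner q = i
  · rw [ho, combine_self, combine_self]
    exact h ho
  · simp [combine, ho]

theorem Follows.eq_of_owner_eq {q : List G.Act} {a : G.Act}
    (hf : G.Follows (G.combine i s τ) p) (hq : q ++ [a] <+: p) (ho : G.owner q = i) :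
    a = s.val (G.label q) :=
  (hf q a hq).trans (by rw [ho, combine_self])

variable (i) in
def AgreeBefore (s σ : G.PStrat i) (p : List G.Act) : Prop :=
  ∀ q a, q ++ [a] <+: p → G.owner q = i → s.val (G.label q) = σ.val (G.label q)

theorem Follows.combine_of_agreeBefore (hf : G.Follows (G.combine i σ τ) p)
    (hag : G.AgreeBefore i s σ p) : G.Follows (G.combine i s τ) p :=
  fun q a hq => (hf q a hq).trans (combine_apply_owner_eq fun ho => (hag q a hq ho).symm)

theorem prefix_outcome_of_agreeBefore (hp : p <+: G.outcome (G.combine i σ τ))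
    (hag : G.AgreeBefore i s σ p) : p <+: G.outcome (G.combine i s τ) :=
  prefix_outcome_of_follows (G.mem_H_of_prefix outcome_mem hp)
    ((follows_outcome.mono hp).combine_of_agreeBefore hag)

theorem agreeBefore_of_follows {p' : List G.Act} (hf : G.Follows (G.combine i σ τ) p)
    (hf' : G.Follows (G.combine i s τ') p') (dp : G.DecOf i p) (dp' : G.Dec p')
    (hl : G.label p = G.label p') : G.AgreeBefore i s σ p := by
  intro q a hq ho
  obtain ⟨q', hq', ho', hl'⟩ := exists_concat_prefix_of_label_eq dp dp' hl hq ho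
  rw [← hl', ← hf'.eq_of_owner_eq hq' ho', hl', ← hf.eq_of_owner_eq hq ho]

theorem agreeBefore_of_agree_off_atOrBelow (dp : G.DecOf i p)
    (hag : ∀ c, G.IsInfo i c → ¬G.AtOrBelow i c (G.label p) → s.val c = σ.val c) :
    G.AgreeBefore i s σ p := fun q _ hq ho =>
  hag _ ⟨q, ⟨G.dec_of_concat_prefix dp.1.1 hq, ho⟩, rfl⟩ (not_atOrBelow_of_concat_prefix dp hq)

theorem prefix_outcome_of_reaches (hp : p <+: G.outcome (G.combine i σ τ)) (dp : G.DecOf i p)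
    (hs : G.Reaches (G.combine i s τ') i (G.label p)) : p <+: G.outcome (G.combine i s τ) := by
  obtain ⟨p', hp', dp', hl⟩ := hs
  exact prefix_outcome_of_agreeBefore hp <|
    agreeBefore_of_follows (follows_outcome.mono hp) (follows_outcome.mono hp') dp dp'.1 hl.symm

open Classical in
noncomputable def splice (σ : G.PStrat i) (c : G.Lab) (s : G.PStrat i) : G.PStrat i :=
  ⟨fun c' => if G.AtOrBelow i c' c then s.val c' else σ.val c', fun h dh => by
    dsimp only
    split_ifs
    · exact s.2 h dh
    · exact σ.2 h dh⟩

theorem splice_val_of_atOrBelow {c c' : G.Lab} (h : G.AtOrBelow i c' c) :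
    (splice σ c s).val c' = s.val c' := by
  simp [splice, h]

theorem splice_val_of_not_atOrBelow {c c' : G.Lab} (h : ¬G.AtOrBelow i c' c) :
    (splice σ c s).val c' = σ.val c' := by
  simp [splice, h]

theorem U_splice (hp : p <+: G.outcome (G.combine i σ τ)) (dp : G.DecOf i p)
    (hs : p <+: G.outcome (G.combine i s τ)) :
    G.U i (G.combine i (splice σ (G.label p) s) τ) = G.U i (G.combine i s τ) := by
  have hag : G.AgreeBefore i (splice σ (G.label p) s) σ p :=
    agreeBefore_of_agree_off_atOrBelow dp fun _ _ hc => splice_val_of_not_atOrBelow hc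
  refine congrArg (G.payoff i) <| outcome_eq_of_agree_from hs
    (prefix_outcome_of_agreeBefore hp hag) fun q hpq dq => combine_apply_owner_eq fun ho => ?_
  exact (splice_val_of_atOrBelow ⟨q, p, ⟨dq, ho⟩, dp, rfl, rfl, hpq⟩).symm

end ExtGame

theorem condDom'_iff_condDom_general {n : ℕ} (G : ExtGame n) (i : Fin n)
    (T : Set (G.OppProf i)) (σ : G.PStrat i) :
    G.CondDom' i σ T ↔ G.CondDom i σ T := by
  constructor
  · rintro ⟨c, hc, ⟨τ₀, hτ₀, p, hp, dp, rfl⟩, m, hm, hagree, hdom⟩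
    have hreach : ∀ s, 0 < m s → p <+: G.outcome (G.combine i s τ₀) := fun s hs =>
      ExtGame.prefix_outcome_of_agreeBefore hp
        (ExtGame.agreeBefore_of_agree_off_atOrBelow dp (hagree s hs))
    exact ⟨_, hc, m, hm, ⟨τ₀, hτ₀, ⟨p, hp, dp, rfl⟩, fun s hs => ⟨p, hreach s hs, dp, rfl⟩⟩,
      fun τ hτ => hdom τ ⟨hτ.1, hτ.2.1⟩⟩
  · rintro ⟨c, hc, m, hm, ⟨τ₀, hτ₀, hσ₀, hs₀⟩, hdom⟩
    refine ⟨c, hc, ⟨τ₀, hτ₀, hσ₀⟩, distMap (ExtGame.splice σ c) m, hm.map _, ?_, ?_⟩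
    · intro t ht c' _ hc'
      obtain ⟨s, -, rfl⟩ := exists_pos_of_distMap_pos ht
      exact ExtGame.splice_val_of_not_atOrBelow hc'
    · rintro τ ⟨hτ, p, hp, dp, rfl⟩
      have hreach : ∀ s, 0 < m s → p <+: G.outcome (G.combine i s τ) := fun s hs =>
        ExtGame.prefix_outcome_of_reaches hp dp (hs₀ s hs)
      have hEU :
          G.EUmixE i (distMap (ExtGame.splice σ (G.label p)) m) τ = G.EUmixE i m τ := by
        rw [ExtGame.EUmixE, ExtGame.EUmixE, sum_distMap_mul]
        refine Finset.sum_congr rfl fun s _ => ?_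
        rcases (hm.1 s).eq_or_lt with hs | hs
        · simp [← hs]
        · rw [ExtGame.U_splice hp dp (hreach s hs)]
      rw [hEU]
      exact hdom τ ⟨hτ, ⟨p, hp, dp, rfl⟩, fun s hs => ⟨p, hreach s hs, dp, rfl⟩⟩

/-- conditional dominance′ coincides with conditional dominance. -/
theorem condDom'_iff_condDom {n : ℕ} (G : ExtGame n) (i : Fin n)
    (Ti : Set (G.PStrat i)) (T : Set (G.OppProf i)) (σ : G.PStrat i) (hσ : σ ∈ Ti) :
    G.CondDom' i σ T ↔ G.CondDom i σ T :=
  condDom'_iff_condDom_general G i T σ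
end
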